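/- arXiv:1503.02044 — 3 statements merged into one kernel-verified Lean document; each statement's English description precedes it below -/
import Mathlib

section
/- In spatial dimension one (Ω = (a,b) ⊂ ℝ), the sparse vector field regularizer coincides with total variation: for every u ∈ BV(a,b), R(u) = TV(u), where R(u) = inf{‖v‖_{M(a,b)} : v a finite signed measure with u'' = v' weakly under no-flux boundary conditions}. -/
open MeasureTheory Filter
open scoped ENNReal

/-- A (scalar) finite Radon measure on the interval `(a,b)`, encoded as a linear
functional on continuous functions whose dual pairing set is bounded. -/
structure Radon1 (a b : ℝ) where
  pair : (ℝ → ℝ) → ℝ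
  pair_add : ∀ f g, pair (f + g) = pair f + pair g
  pair_smul : ∀ (c : ℝ) f, pair (c • f) = c * pair f
  bdd : BddAbove {r | ∃ φ : ℝ → ℝ, Continuous φ ∧ (∀ x ∈ Set.Ioo a b, |φ x| ≤ 1) ∧ r = pair φ}

/-- Total variation norm `‖v‖_{M(a,b)}`. -/
noncomputable def Radon1.tvNorm {a b : ℝ} (v : Radon1 a b) : ℝ :=
  sSup {r | ∃ φ : ℝ → ℝ, Continuous φ ∧ (∀ x ∈ Set.Ioo a b, |φ x| ≤ 1) ∧ r = v.pair φ}

/-- Weak form of `u'' = v'` with no-flux boundary conditions: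
`∫ φ'' u + ∫ φ' dv = 0` for all `φ ∈ C²` with `φ'(a) = φ'(b) = 0`. -/
def Adm1 (a b : ℝ) (u : ℝ → ℝ) (v : Radon1 a b) : Prop :=
  ∀ φ : ℝ → ℝ, ContDiff ℝ 2 φ → deriv φ a = 0 → deriv φ b = 0 →
    (∫ x in Set.Ioo a b, deriv (deriv φ) x * u x) + v.pair (deriv φ) = 0

/-- The 1D sparse vector field regularizer. -/
noncomputable def R1 (a b : ℝ) (u : ℝ → ℝ) : ℝ≥0∞ :=
  ⨅ (v : Radon1 a b) (_ : Adm1 a b u v), ENNReal.ofReal v.tvNorm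

/-- Dual set defining the total variation of `u` on `(a,b)`. -/
def TVset1 (a b : ℝ) (u : ℝ → ℝ) : Set ℝ :=
  {r | ∃ g : ℝ → ℝ, ContDiff ℝ 1 g ∧ HasCompactSupport g ∧ tsupport g ⊆ Set.Ioo a b ∧
    (∀ x, |g x| ≤ 1) ∧ r = ∫ x in Set.Ioo a b, u x * deriv g x}

/-- Total variation of `u` on `(a,b)`. -/
noncomputable def TV1 (a b : ℝ) (u : ℝ → ℝ) : ℝ := sSup (TVset1 a b u)

/-!
Both inequalities come from testing the constraint with `φ' = ψ`, which gives
`v(ψ) = -∫ ψ' u` for every `ψ ∈ C¹` vanishing at `a` and `b`.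

If moreover `ψ` has compact support in `(a,b)` and `|ψ| ≤ 1`, then `∫ u ψ' = v(-ψ) ≤ ‖v‖`;
hence `TV(u) ≤ ‖v‖` for every admissible `v`.

Conversely, for such a `ψ` with `|ψ| ≤ 1` on `(a,b)`, the products `ψ χ_δ` with smooth cut-offs
`χ_δ` are TV test functions, and `∫ u (ψ χ_δ)' → ∫ u ψ'` by dominated convergence: `ψ χ_δ'` stays
bounded because `ψ` vanishes linearly at the endpoints while `χ_δ'` is `O(1/δ)` on a layer of
width `δ`. So `ψ ↦ -∫ ψ' u` is dominated by `TV(u) · sup_{(a,b)} |ψ|`, and Hahn–Banach extends it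
to a linear functional with the same bound: an admissible `v` with `‖v‖ ≤ TV(u)`.
-/

open Set Topology

namespace Real

lemma deriv_smoothTransition_eq_zero {t : ℝ} (ht : t ∉ Icc 0 1) :
    deriv smoothTransition t = 0 := by
  rw [mem_Icc, not_and_or, not_le, not_le] at ht
  rcases ht with h | h
  · rw [(eventuallyEq_of_mem (Iio_mem_nhds h) fun y hy =>
      smoothTransition.zero_of_nonpos (le_of_lt hy)).deriv_eq, deriv_const]
  · rw [(eventuallyEq_of_mem (Ioi_mem_nhds h) fun y hy =>
      smoothTransition.one_of_one_le (le_of_lt hy)).deriv_eq, deriv_const]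

lemma exists_abs_deriv_smoothTransition_le : ∃ C, ∀ t, |deriv smoothTransition t| ≤ C :=
  (smoothTransition.contDiff.continuous_deriv le_rfl).bounded_above_of_compact_support <|
    HasCompactSupport.intro isCompact_Icc fun _ => deriv_smoothTransition_eq_zero

lemma exists_abs_mul_deriv_smoothTransition_div_le :
    ∃ K, ∀ {δ L r y : ℝ}, 0 < δ → 0 ≤ L → |y| ≤ L * r →
      |y * deriv smoothTransition (r / δ - 1) / δ| ≤ K * L := by
  obtain ⟨C, hC⟩ := exists_abs_deriv_smoothTransition_le
  refine ⟨2 * C, fun {δ L r y} hδ hL hy => ?_⟩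
  by_cases hr : r / δ - 1 ∈ Icc 0 1
  · have hr2 : r ≤ 2 * δ := by
      have := hr.2; rw [sub_le_iff_le_add, div_le_iff₀ hδ] at this; linarith
    rw [abs_div, abs_mul, abs_of_pos hδ, div_le_iff₀ hδ]
    calc |y| * |deriv smoothTransition (r / δ - 1)| ≤ (L * (2 * δ)) * C :=
          mul_le_mul (hy.trans (mul_le_mul_of_nonneg_left hr2 hL)) (hC _)
            (abs_nonneg _) (by positivity)
      _ = 2 * C * L * δ := by ring
  · rw [deriv_smoothTransition_eq_zero hr, mul_zero, zero_div, abs_zero]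
    have := (abs_nonneg _).trans (hC 0)
    positivity

end Real

open Real

noncomputable def cutoff (a b δ x : ℝ) : ℝ :=
  smoothTransition ((x - a) / δ - 1) * smoothTransition ((b - x) / δ - 1)

section Cutoff

variable {a b δ : ℝ}

lemma contDiff_cutoff {n : ℕ∞} : ContDiff ℝ n (cutoff a b δ) := by
  unfold cutoff
  fun_prop

lemma cutoff_nonneg (x : ℝ) : 0 ≤ cutoff a b δ x :=
  mul_nonneg (smoothTransition.nonneg _) (smoothTransition.nonneg _)

lemma cutoff_le_one (x : ℝ) : cutoff a b δ x ≤ 1 :=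
  mul_le_one₀ (smoothTransition.le_one _) (smoothTransition.nonneg _)
    (smoothTransition.le_one _)

lemma cutoff_eq_zero (hδ : 0 < δ) {x : ℝ} (hx : x ∉ Ioo (a + δ) (b - δ)) : cutoff a b δ x = 0 := by
  rw [mem_Ioo, not_and_or, not_lt, not_lt] at hx
  rcases hx with hx | hx
  · rw [cutoff, smoothTransition.zero_of_nonpos, zero_mul]
    rw [sub_nonpos, div_le_one hδ]; linarith
  · rw [cutoff, smoothTransition.zero_of_nonpos (x := (b - x) / δ - 1), mul_zero]
    rw [sub_nonpos, div_le_one hδ]; linarith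

lemma tsupport_cutoff_subset (hδ : 0 < δ) : tsupport (cutoff a b δ) ⊆ Icc (a + δ) (b - δ) :=
  closure_minimal (fun _ hx => Ioo_subset_Icc_self (by_contra fun h => hx (cutoff_eq_zero hδ h)))
    isClosed_Icc

lemma hasCompactSupport_cutoff (hδ : 0 < δ) : HasCompactSupport (cutoff a b δ) :=
  isCompact_Icc.of_isClosed_subset (isClosed_tsupport _) (tsupport_cutoff_subset hδ)

lemma cutoff_eventuallyEq_one {x : ℝ} (hδ : 0 < δ) (hx : x ∈ Ioo (a + 2 * δ) (b - 2 * δ)) :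
    cutoff a b δ =ᶠ[𝓝 x] 1 := by
  filter_upwards [isOpen_Ioo.mem_nhds hx] with y hy
  rw [cutoff, smoothTransition.one_of_one_le, smoothTransition.one_of_one_le, mul_one,
    Pi.one_apply]
  all_goals rw [le_sub_iff_add_le, one_add_one_eq_two, le_div_iff₀ hδ]; linarith [hy.1, hy.2]

lemma deriv_cutoff (x : ℝ) : deriv (cutoff a b δ) x =
    deriv smoothTransition ((x - a) / δ - 1) / δ * smoothTransition ((b - x) / δ - 1) -
      smoothTransition ((x - a) / δ - 1) * (deriv smoothTransition ((b - x) / δ - 1) / δ) := by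
  have hst (t : ℝ) : HasDerivAt smoothTransition (deriv smoothTransition t) t :=
    (smoothTransition.contDiff (n := 1)).differentiable one_ne_zero |>.differentiableAt.hasDerivAt
  have h1 := (hst _).comp x ((((hasDerivAt_id' x).sub_const a).div_const δ).sub_const 1)
  have h2 := (hst _).comp x ((((hasDerivAt_id' x).const_sub b).div_const δ).sub_const 1)
  have h : HasDerivAt (cutoff a b δ) _ x := h1.mul h2
  rw [h.deriv]
  simp only [Function.comp_apply]
  ring

/-- A function vanishing linearly at both endpoints absorbs the `1 / δ` blow-up of the slope of
`cutoff a b δ`. -/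
lemma exists_abs_mul_deriv_cutoff_le :
    ∃ K, ∀ {δ L x y : ℝ}, 0 < δ → 0 ≤ L → |y| ≤ L * (x - a) → |y| ≤ L * (b - x) →
      |y * deriv (cutoff a b δ) x| ≤ K * L := by
  obtain ⟨K, hK⟩ := exists_abs_mul_deriv_smoothTransition_div_le
  refine ⟨2 * K, fun {δ L x y} hδ hL ha hb => ?_⟩
  have hs (t : ℝ) : |smoothTransition t| ≤ 1 := by
    rw [abs_of_nonneg (smoothTransition.nonneg t)]; exact smoothTransition.le_one t
  rw [deriv_cutoff, mul_sub]
  refine (abs_sub _ _).trans ?_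
  calc _ = |y * deriv smoothTransition ((x - a) / δ - 1) / δ| *
          |smoothTransition ((b - x) / δ - 1)| + |smoothTransition ((x - a) / δ - 1)| *
          |y * deriv smoothTransition ((b - x) / δ - 1) / δ| := by
        rw [← abs_mul, ← abs_mul]; ring_nf
    _ ≤ K * L * 1 + 1 * (K * L) :=
        add_le_add
          (mul_le_mul (hK hδ hL ha) (hs _) (abs_nonneg _) ((abs_nonneg _).trans (hK hδ hL ha)))
          (mul_le_mul (hs _) (hK hδ hL hb) (abs_nonneg _) zero_le_one)
    _ = 2 * K * L := by ring

end Cutoff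

section TotalVariation

variable {a b : ℝ} {u ψ : ℝ → ℝ}

lemma zero_mem_TVset1 : (0 : ℝ) ∈ TVset1 a b u :=
  ⟨0, contDiff_const, HasCompactSupport.zero, by simp, by simp, by simp⟩

lemma TV1_nonneg (hBV : BddAbove (TVset1 a b u)) : 0 ≤ TV1 a b u :=
  le_csSup hBV zero_mem_TVset1

lemma integral_mul_deriv_mul_cutoff_mem_TVset1 (hψ : ContDiff ℝ 1 ψ)
    (hle : ∀ x ∈ Ioo a b, |ψ x| ≤ 1) {δ : ℝ} (hδ : 0 < δ) :
    ∫ x in Ioo a b, u x * deriv (ψ * cutoff a b δ) x ∈ TVset1 a b u := by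
  refine ⟨ψ * cutoff a b δ, hψ.mul contDiff_cutoff, (hasCompactSupport_cutoff hδ).mul_left,
    tsupport_mul_subset_right.trans ((tsupport_cutoff_subset hδ).trans ?_), fun x => ?_, rfl⟩
  · exact Icc_subset_Ioo (by linarith) (by linarith)
  rw [Pi.mul_apply, abs_mul, abs_of_nonneg (cutoff_nonneg x)]
  by_cases hx : x ∈ Ioo a b
  · exact mul_le_one₀ (hle x hx) (cutoff_nonneg x) (cutoff_le_one x)
  · rw [cutoff_eq_zero hδ fun h => hx ⟨by linarith [h.1], by linarith [h.2]⟩, mul_zero]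
    exact zero_le_one

lemma exists_abs_le_mul_dist_endpoints (hψ : ContDiff ℝ 1 ψ) (ha : ψ a = 0) (hb : ψ b = 0) :
    ∃ L, 0 ≤ L ∧ ∀ x ∈ Icc a b, |deriv ψ x| ≤ L ∧ |ψ x| ≤ L * (x - a) ∧ |ψ x| ≤ L * (b - x) := by
  obtain ⟨L, hL⟩ := isCompact_Icc.exists_bound_of_continuousOn
    (hψ.continuous_deriv le_rfl).continuousOn (s := Icc a b)
  have hL' (x : ℝ) (hx : x ∈ Icc a b) : ‖deriv ψ x‖ ≤ max L 0 := (hL x hx).trans (le_max_left _ _)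
  have hlip {y z : ℝ} : y ∈ Icc a b → z ∈ Icc a b → ‖ψ z - ψ y‖ ≤ max L 0 * ‖z - y‖ :=
    (convex_Icc a b).norm_image_sub_le_of_norm_deriv_le
      (fun _ _ => (hψ.differentiable one_ne_zero).differentiableAt) hL'
  refine ⟨max L 0, le_max_right _ _, fun x hx => ⟨hL' x hx, ?_, ?_⟩⟩
  · simpa [ha, abs_of_nonneg (sub_nonneg.2 hx.1)] using hlip ⟨le_rfl, hx.1.trans hx.2⟩ hx
  · simpa [hb, abs_of_nonneg (sub_nonneg.2 hx.2), abs_sub_comm] using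
      hlip ⟨hx.1.trans hx.2, le_rfl⟩ hx

lemma tendsto_integral_mul_deriv_mul_cutoff (hu : IntegrableOn u (Ioo a b))
    (hψ : ContDiff ℝ 1 ψ) (ha : ψ a = 0) (hb : ψ b = 0) :
    Tendsto (fun δ => ∫ x in Ioo a b, u x * deriv (ψ * cutoff a b δ) x) (𝓝[>] 0)
      (𝓝 (∫ x in Ioo a b, u x * deriv ψ x)) := by
  obtain ⟨L, hL0, hL⟩ := exists_abs_le_mul_dist_endpoints hψ ha hb
  obtain ⟨K, hK⟩ := exists_abs_mul_deriv_cutoff_le (a := a) (b := b)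
  have hdψ := hψ.differentiable one_ne_zero
  refine tendsto_integral_filter_of_dominated_convergence (fun x => |u x| * (L + K * L))
    (Eventually.of_forall fun δ => hu.aestronglyMeasurable.mul
      ((hψ.mul contDiff_cutoff).continuous_deriv le_rfl).aestronglyMeasurable)
    (eventually_nhdsWithin_of_forall fun δ hδ => ?_) (hu.norm.mul_const _)
    (ae_restrict_of_forall_mem measurableSet_Ioo fun x hx => ?_)
  · refine ae_restrict_of_forall_mem measurableSet_Ioo fun x hx => ?_
    obtain ⟨hψ', hψa, hψb⟩ := hL x (Ioo_subset_Icc_self hx)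
    rw [deriv_mul (hdψ x) ((contDiff_cutoff (n := 1)).differentiable one_ne_zero x), norm_mul,
      Real.norm_eq_abs]
    refine mul_le_mul_of_nonneg_left ((abs_add_le _ _).trans (add_le_add ?_ (hK hδ hL0 hψa hψb)))
      (abs_nonneg _)
    rw [abs_mul, abs_of_nonneg (cutoff_nonneg x)]
    exact (mul_le_of_le_one_right (abs_nonneg _) (cutoff_le_one x)).trans hψ'
  · have hpos : 0 < min (x - a) (b - x) / 2 := by
      have := hx.1; have := hx.2; positivity
    refine tendsto_const_nhds.congr' ?_
    filter_upwards [Ioo_mem_nhdsGT hpos] with δ hδ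
    have hxδ : x ∈ Ioo (a + 2 * δ) (b - 2 * δ) := by
      constructor <;> linarith [hδ.2, min_le_left (x - a) (b - x), min_le_right (x - a) (b - x)]
    have hloc : ψ * cutoff a b δ =ᶠ[𝓝 x] ψ := by
      filter_upwards [cutoff_eventuallyEq_one hδ.1 hxδ] with y hy
      rw [Pi.mul_apply, hy, Pi.one_apply, mul_one]
    rw [hloc.deriv_eq]

lemma integral_mul_deriv_le_TV1 (hu : IntegrableOn u (Ioo a b)) (hBV : BddAbove (TVset1 a b u))
    (hψ : ContDiff ℝ 1 ψ) (ha : ψ a = 0) (hb : ψ b = 0) (hle : ∀ x ∈ Ioo a b, |ψ x| ≤ 1) :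
    ∫ x in Ioo a b, u x * deriv ψ x ≤ TV1 a b u :=
  le_of_tendsto (tendsto_integral_mul_deriv_mul_cutoff hu hψ ha hb)
    (eventually_nhdsWithin_of_forall fun _ hδ =>
      le_csSup hBV (integral_mul_deriv_mul_cutoff_mem_TVset1 hψ hle hδ))

end TotalVariation

/-- Hahn–Banach for a functional dominated by a function that is sublinear only on a subspace
`V ⊇ W`: dominate instead by `N ∘ P` for a linear projection `P` onto `V`. -/
lemma exists_extension_of_le_sublinearOn {E : Type*} [AddCommGroup E] [Module ℝ E]
    {V W : Submodule ℝ E} (hWV : W ≤ V) (f : W →ₗ[ℝ] ℝ) (N : E → ℝ)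
    (N_hom : ∀ c : ℝ, 0 < c → ∀ x ∈ V, N (c • x) = c * N x)
    (N_add : ∀ x ∈ V, ∀ y ∈ V, N (x + y) ≤ N x + N y) (hf : ∀ x : W, f x ≤ N x) :
    ∃ g : E →ₗ[ℝ] ℝ, (∀ x : W, g x = f x) ∧ ∀ x ∈ V, g x ≤ N x := by
  obtain ⟨q, hq⟩ := V.exists_isCompl
  have hP (x : E) : V.projection q hq x ∈ V := V.projection_apply_mem hq x
  obtain ⟨g, hgf, hgN⟩ := exists_extension_of_le_sublinear ⟨W, f⟩ (fun x => N (V.projection q hq x))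
    (fun c hc x => by rw [map_smul, N_hom c hc _ (hP x)])
    (fun x y => by rw [map_add]; exact N_add _ (hP x) _ (hP y))
    (fun x => by rw [V.projection_apply_of_mem_left hq (hWV x.2)]; exact hf x)
  exact ⟨g, hgf, fun x hx => (hgN x).trans_eq (by rw [V.projection_apply_of_mem_left hq hx])⟩

def continuousOnIccSubmodule (a b : ℝ) : Submodule ℝ (ℝ → ℝ) where
  carrier := {ψ | ContinuousOn ψ (Icc a b)}
  add_mem' := ContinuousOn.add
  zero_mem' := continuousOn_const
  smul_mem' c _ h := h.const_smul c

def contDiffVanishingAtEndpoints (a b : ℝ) : Submodule ℝ (ℝ → ℝ) where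
  carrier := {ψ | ContDiff ℝ 1 ψ ∧ ψ a = 0 ∧ ψ b = 0}
  add_mem' := fun ⟨h, ha, hb⟩ ⟨h', ha', hb'⟩ => ⟨h.add h', by simp [ha, ha'], by simp [hb, hb']⟩
  zero_mem' := ⟨contDiff_const, rfl, rfl⟩
  smul_mem' c _ := fun ⟨h, ha, hb⟩ => ⟨h.const_smul c, by simp [ha], by simp [hb]⟩

lemma contDiffVanishingAtEndpoints_le (a b : ℝ) :
    contDiffVanishingAtEndpoints a b ≤ continuousOnIccSubmodule a b :=
  fun _ h => h.1.continuous.continuousOn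

-- Junk value `0` when `ψ` is unbounded on `(a,b)`, so it is sublinear only on bounded functions.
noncomputable def supAbsIoo (a b : ℝ) (ψ : ℝ → ℝ) : ℝ := ⨆ x : Ioo a b, |ψ x|

section SupAbs

variable {a b : ℝ} {φ ψ : ℝ → ℝ}

lemma abs_le_supAbsIoo (hψ : ψ ∈ continuousOnIccSubmodule a b) {x : ℝ} (hx : x ∈ Ioo a b) :
    |ψ x| ≤ supAbsIoo a b ψ := by
  refine le_ciSup (f := fun x : Ioo a b => |ψ x|) ?_ ⟨x, hx⟩
  refine (isCompact_Icc.bddAbove_image (continuous_abs.comp_continuousOn hψ)).mono ?_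
  rintro _ ⟨y, rfl⟩
  exact ⟨y, Ioo_subset_Icc_self y.2, rfl⟩

lemma supAbsIoo_nonneg : 0 ≤ supAbsIoo a b ψ := Real.iSup_nonneg fun _ => abs_nonneg _

lemma supAbsIoo_le {M : ℝ} (h : ∀ x ∈ Ioo a b, |ψ x| ≤ M) (hM : 0 ≤ M) : supAbsIoo a b ψ ≤ M :=
  Real.iSup_le (fun x => h x x.2) hM

lemma supAbsIoo_add_le (hφ : φ ∈ continuousOnIccSubmodule a b)
    (hψ : ψ ∈ continuousOnIccSubmodule a b) :
    supAbsIoo a b (φ + ψ) ≤ supAbsIoo a b φ + supAbsIoo a b ψ :=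
  supAbsIoo_le (fun _ hx => (abs_add_le _ _).trans
      (add_le_add (abs_le_supAbsIoo hφ hx) (abs_le_supAbsIoo hψ hx)))
    (add_nonneg supAbsIoo_nonneg supAbsIoo_nonneg)

lemma supAbsIoo_smul {c : ℝ} (hc : 0 ≤ c) : supAbsIoo a b (c • ψ) = c * supAbsIoo a b ψ := by
  simp only [supAbsIoo, Real.mul_iSup_of_nonneg hc, Pi.smul_apply, smul_eq_mul, abs_mul,
    abs_of_nonneg hc]

end SupAbs

section DerivPairing

variable {a b : ℝ} {u ψ : ℝ → ℝ}

lemma integrableOn_deriv_mul (hu : IntegrableOn u (Ioo a b)) (hψ : ContDiff ℝ 1 ψ) :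
    IntegrableOn (fun x => deriv ψ x * u x) (Ioo a b) :=
  hu.continuousOn_mul_of_subset (hψ.continuous_deriv le_rfl).continuousOn isCompact_Icc
    measurableSet_Ioo Ioo_subset_Icc_self

lemma neg_integral_deriv_mul_le_TV1_mul_supAbsIoo (hu : IntegrableOn u (Ioo a b))
    (hBV : BddAbove (TVset1 a b u)) (hψ : ψ ∈ contDiffVanishingAtEndpoints a b) :
    -∫ x in Ioo a b, deriv ψ x * u x ≤ TV1 a b u * supAbsIoo a b ψ := by
  obtain ⟨hψ1, ha, hb⟩ := hψ
  have hscaled : ∀ M > supAbsIoo a b ψ, -∫ x in Ioo a b, deriv ψ x * u x ≤ TV1 a b u * M := by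
    intro M hM
    have hM0 : 0 < M := supAbsIoo_nonneg.trans_lt hM
    have h := integral_mul_deriv_le_TV1 hu hBV (ψ := (-M⁻¹) • ψ) (hψ1.const_smul (-M⁻¹))
      (by simp [ha]) (by simp [hb]) fun x hx => by
        rw [Pi.smul_apply, smul_eq_mul, abs_mul, abs_neg, abs_inv, abs_of_pos hM0,
          inv_mul_le_one₀ hM0]
        exact (abs_le_supAbsIoo hψ1.continuous.continuousOn hx).trans hM.le
    have hint : ∫ x in Ioo a b, u x * deriv ((-M⁻¹) • ψ) x
        = -M⁻¹ * ∫ x in Ioo a b, deriv ψ x * u x := by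
      rw [← integral_const_mul]
      congr 1 with x
      rw [deriv_const_smul _ ((hψ1.differentiable one_ne_zero) x), smul_eq_mul]
      ring
    rw [hint, neg_mul, ← mul_neg, inv_mul_le_iff₀ hM0, mul_comm] at h
    exact h
  exact ge_of_tendsto (((continuous_const_mul _).tendsto _).mono_left nhdsWithin_le_nhds)
    (eventually_nhdsWithin_of_forall (s := Ioi _) hscaled)

end DerivPairing

noncomputable def negIntegralDerivMul (a b : ℝ) (u : ℝ → ℝ) (hu : IntegrableOn u (Ioo a b)) :
    contDiffVanishingAtEndpoints a b →ₗ[ℝ] ℝ where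
  toFun ψ := -∫ x in Ioo a b, deriv ψ x * u x
  map_add' ψ φ := by
    have hψ := ψ.2.1.differentiable one_ne_zero
    have hφ := φ.2.1.differentiable one_ne_zero
    simp only [Submodule.coe_add, deriv_add (hψ _) (hφ _), add_mul]
    rw [integral_add (integrableOn_deriv_mul hu ψ.2.1) (integrableOn_deriv_mul hu φ.2.1), neg_add]
  map_smul' c ψ := by
    have hψ := ψ.2.1.differentiable one_ne_zero
    simp only [Submodule.coe_smul, deriv_const_smul c (hψ _), smul_eq_mul, mul_assoc,
      integral_const_mul, RingHom.id_apply, mul_neg]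

namespace Radon1

variable {a b : ℝ}

def ofLinearMap (g : (ℝ → ℝ) →ₗ[ℝ] ℝ) (C : ℝ)
    (hg : ∀ φ : ℝ → ℝ, Continuous φ → (∀ x ∈ Ioo a b, |φ x| ≤ 1) → g φ ≤ C) : Radon1 a b where
  pair := g
  pair_add := g.map_add
  pair_smul := g.map_smul
  bdd := ⟨C, by rintro _ ⟨φ, hφ, h1, rfl⟩; exact hg φ hφ h1⟩

lemma pair_le_tvNorm (v : Radon1 a b) {φ : ℝ → ℝ} (hφ : Continuous φ)
    (h1 : ∀ x ∈ Ioo a b, |φ x| ≤ 1) : v.pair φ ≤ v.tvNorm :=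
  le_csSup v.bdd ⟨φ, hφ, h1, rfl⟩

lemma tvNorm_le {v : Radon1 a b} {C : ℝ}
    (h : ∀ φ : ℝ → ℝ, Continuous φ → (∀ x ∈ Ioo a b, |φ x| ≤ 1) → v.pair φ ≤ C) : v.tvNorm ≤ C :=
  csSup_le ⟨_, 0, continuous_const, by simp, rfl⟩ (by rintro _ ⟨φ, hφ, h1, rfl⟩; exact h φ hφ h1)

end Radon1

section Admissible

variable {a b : ℝ} {u φ ψ : ℝ → ℝ}

lemma deriv_mem_contDiffVanishingAtEndpoints (hφ : ContDiff ℝ 2 φ) (ha : deriv φ a = 0)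
    (hb : deriv φ b = 0) : deriv φ ∈ contDiffVanishingAtEndpoints a b :=
  ⟨hφ.iterate_deriv' 1 1, ha, hb⟩

lemma exists_contDiff_two_deriv_eq (hψ : ContDiff ℝ 1 ψ) : ∃ φ, ContDiff ℝ 2 φ ∧ deriv φ = ψ := by
  have hφ (x : ℝ) : HasDerivAt (fun y => ∫ t in (0 : ℝ)..y, ψ t) (ψ x) x :=
    (hψ.continuous.integral_hasStrictDerivAt 0 x).hasDerivAt
  have hderiv : deriv (fun y => ∫ t in (0 : ℝ)..y, ψ t) = ψ := funext fun x => (hφ x).deriv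
  refine ⟨_, (contDiff_succ_iff_deriv (n := 1)).2 ⟨fun x => (hφ x).differentiableAt, by simp, ?_⟩,
    hderiv⟩
  rwa [hderiv]

lemma Adm1.pair_eq {v : Radon1 a b} (hv : Adm1 a b u v)
    (hψ : ψ ∈ contDiffVanishingAtEndpoints a b) : v.pair ψ = -∫ x in Ioo a b, deriv ψ x * u x := by
  obtain ⟨φ, hφ, rfl⟩ := exists_contDiff_two_deriv_eq hψ.1
  linarith [hv φ hφ hψ.2.1 hψ.2.2]

lemma TV1_le_tvNorm {v : Radon1 a b} (hv : Adm1 a b u v) : TV1 a b u ≤ v.tvNorm := by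
  refine csSup_le ⟨0, zero_mem_TVset1⟩ ?_
  rintro _ ⟨g, hg, -, hsupp, hg1, rfl⟩
  have hvan : g ∈ contDiffVanishingAtEndpoints a b :=
    ⟨hg, image_eq_zero_of_notMem_tsupport fun h => (hsupp h).1.false,
      image_eq_zero_of_notMem_tsupport fun h => (hsupp h).2.false⟩
  calc ∫ x in Ioo a b, u x * deriv g x = v.pair ((-1 : ℝ) • g) := by
        simp only [v.pair_smul, hv.pair_eq hvan, mul_comm (u _)]
        ring
    _ ≤ v.tvNorm := v.pair_le_tvNorm (hg.continuous.const_smul _) fun x _ => by simpa using hg1 x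

lemma exists_adm1_tvNorm_le_TV1 (hu : IntegrableOn u (Ioo a b)) (hBV : BddAbove (TVset1 a b u)) :
    ∃ v : Radon1 a b, Adm1 a b u v ∧ v.tvNorm ≤ TV1 a b u := by
  obtain ⟨g, hgL, hgN⟩ := exists_extension_of_le_sublinearOn
    (contDiffVanishingAtEndpoints_le a b) (negIntegralDerivMul a b u hu)
    (fun ψ => TV1 a b u * supAbsIoo a b ψ) (fun c hc ψ _ => by rw [supAbsIoo_smul hc.le]; ring)
    (fun φ hφ ψ hψ => (mul_le_mul_of_nonneg_left (supAbsIoo_add_le hφ hψ)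
      (TV1_nonneg hBV)).trans_eq (mul_add _ _ _))
    (fun ψ => neg_integral_deriv_mul_le_TV1_mul_supAbsIoo hu hBV ψ.2)
  have hbound (φ : ℝ → ℝ) (hφ : Continuous φ) (h1 : ∀ x ∈ Ioo a b, |φ x| ≤ 1) :
      g φ ≤ TV1 a b u :=
    (hgN φ hφ.continuousOn).trans
      (mul_le_of_le_one_right (TV1_nonneg hBV) (supAbsIoo_le h1 zero_le_one))
  refine ⟨Radon1.ofLinearMap g _ hbound, fun φ hφ ha hb => ?_, Radon1.tvNorm_le hbound⟩
  have h := hgL ⟨_, deriv_mem_contDiffVanishingAtEndpoints hφ ha hb⟩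
  simp only [Radon1.ofLinearMap, h, negIntegralDerivMul, LinearMap.coe_mk, AddHom.coe_mk,
    add_neg_cancel]

end Admissible

theorem svf_eq_tv_one_dim_general (a b : ℝ) (u : ℝ → ℝ)
    (hu : Integrable u (volume.restrict (Set.Ioo a b)))
    (hBV : BddAbove (TVset1 a b u)) :
    R1 a b u = ENNReal.ofReal (TV1 a b u) := by
  refine le_antisymm ?_ (le_iInf₂ fun v hv => ENNReal.ofReal_le_ofReal (TV1_le_tvNorm hv))
  obtain ⟨v, hv, hle⟩ := exists_adm1_tvNorm_le_TV1 hu hBV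
  exact (iInf₂_le v hv).trans (ENNReal.ofReal_le_ofReal hle)

/-- in spatial dimension one the sparse vector field regularizer
coincides with the total variation: `R(u) = TV(u)` for every `u ∈ BV(a,b)`. -/
theorem svf_eq_tv_one_dim (a b : ℝ) (hab : a < b) (u : ℝ → ℝ)
    (hu : Integrable u (volume.restrict (Set.Ioo a b)))
    (hBV : BddAbove (TVset1 a b u)) :
    R1 a b u = ENNReal.ofReal (TV1 a b u) :=
  svf_eq_tv_one_dim_general a b u hu hBV
end

section
/- Let f = χ_{B_R} be the indicator of a ball, an eigenfunction of the regularizer R in the sense λf ∈ ∂R(f). Then the minimizer of the variational problem min_u (λ'/2)‖u − f‖₂² + R(u) is u = c·f for a constant 0 ≤ c < 1 depending on λ' and λ, namely c = max(0, 1 − λ/λ'); i.e., eigenfunctions of one-homogeneous regularizers are reconstructed up to a loss of contrast. -/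
/-!
Write `c = max 0 (1 - λ/λ')`. Since `J` is positively one-homogeneous, `p` is a subgradient of `J`
at `v` exactly when `J v = ⟪p, v⟫` and `⟪p, w⟫ ≤ J w` for all `w`; in particular the subgradients
at `f` are also subgradients at every `c • f` with `c ≥ 0`, and `J ≥ 0` makes every `t • p`,
`0 ≤ t ≤ 1`, a subgradient at `0`. The first-order condition `λ' (f - c f) ∈ ∂J(c f)`, which is
sufficient for a minimizer of `(λ'/2)‖u - f‖² + J u`, therefore holds: for `λ ≤ λ'` it reads
`λ f ∈ ∂J(c f)`, and for `λ' < λ` (where `c = 0`) it reads `(λ'/λ) • (λ f) ∈ ∂J(0)`.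
-/

open scoped RealInnerProductSpace

section Subgradient

variable {H : Type*} [NormedAddCommGroup H] [InnerProductSpace ℝ H]

def HasSubgradientAt (J : H → ℝ) (p v : H) : Prop :=
  ∀ w, J v + ⟪p, w - v⟫ ≤ J w

theorem HasSubgradientAt.of_inner_eq_of_inner_le {J : H → ℝ} {p v : H} (hv : J v = ⟪p, v⟫)
    (hle : ∀ w, ⟪p, w⟫ ≤ J w) : HasSubgradientAt J p v := by
  intro w
  rw [inner_sub_right, hv]
  linarith [hle w]

section Homogeneous

variable {J : H → ℝ} (hJ : ∀ c : ℝ, 0 ≤ c → ∀ u, J (c • u) = c * J u)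
include hJ

theorem HasSubgradientAt.eq_inner_of_homogeneous {p v : H} (h : HasSubgradientAt J p v) :
    J v = ⟪p, v⟫ := by
  have h0 := h 0
  have h2 := h ((2 : ℝ) • v)
  rw [zero_sub, inner_neg_right, ← zero_smul ℝ (0 : H), hJ 0 le_rfl, zero_mul] at h0
  rw [two_smul, add_sub_cancel_right, ← two_smul ℝ, hJ 2 zero_le_two] at h2
  linarith

theorem HasSubgradientAt.inner_le_of_homogeneous {p v : H} (h : HasSubgradientAt J p v) (w : H) :
    ⟪p, w⟫ ≤ J w := by
  have := h w
  rw [inner_sub_right, h.eq_inner_of_homogeneous hJ] at this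
  linarith

theorem HasSubgradientAt.smul_of_homogeneous {p v : H} (h : HasSubgradientAt J p v) {c : ℝ}
    (hc : 0 ≤ c) : HasSubgradientAt J p (c • v) := by
  refine .of_inner_eq_of_inner_le ?_ (h.inner_le_of_homogeneous hJ)
  rw [hJ c hc, h.eq_inner_of_homogeneous hJ, inner_smul_right]

theorem HasSubgradientAt.smul_at_zero_of_homogeneous {p v : H} (h : HasSubgradientAt J p v)
    (hJnonneg : ∀ u, 0 ≤ J u) {t : ℝ} (ht₀ : 0 ≤ t) (ht₁ : t ≤ 1) :
    HasSubgradientAt J (t • p) 0 := by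
  refine .of_inner_eq_of_inner_le ?_ fun w => ?_
  · rw [inner_zero_right, ← zero_smul ℝ (0 : H), hJ 0 le_rfl, zero_mul]
  · calc ⟪t • p, w⟫ = t * ⟪p, w⟫ := inner_smul_left _ _ _
      _ ≤ t * J w := mul_le_mul_of_nonneg_left (h.inner_le_of_homogeneous hJ w) ht₀
      _ ≤ J w := mul_le_of_le_one_left (hJnonneg w) ht₁

end Homogeneous

theorem HasSubgradientAt.isMinimizer_sq_norm_add {J : H → ℝ} {f v : H} {μ : ℝ} (hμ : 0 ≤ μ)
    (h : HasSubgradientAt J (μ • (f - v)) v) (u : H) :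
    μ / 2 * ‖v - f‖ ^ 2 + J v ≤ μ / 2 * ‖u - f‖ ^ 2 + J u := by
  have hexpand : ‖u - f‖ ^ 2 = ‖u - v‖ ^ 2 + 2 * ⟪u - v, v - f⟫ + ‖v - f‖ ^ 2 := by
    rw [← norm_add_sq_real, sub_add_sub_cancel]
  have hsub := h u
  rw [real_inner_smul_left, ← neg_sub v f, inner_neg_left, real_inner_comm] at hsub
  rw [hexpand]
  nlinarith [sq_nonneg ‖u - v‖]

end Subgradient

theorem eigenfunction_loss_of_contrast_general {H : Type*} [NormedAddCommGroup H]
    [InnerProductSpace ℝ H]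
    (J : H → ℝ)
    (hJhom : ∀ (c : ℝ), 0 ≤ c → ∀ u : H, J (c • u) = c * J u)
    (hJnonneg : ∀ u : H, 0 ≤ J u)
    (f : H) (lam lam' : ℝ) (hlam : 0 < lam) (hlam' : 0 < lam')
    (hEig : ∀ w : H, J f + ⟪lam • f, w - f⟫ ≤ J w) :
    ∀ u : H,
      lam' / 2 * ‖(max 0 (1 - lam / lam')) • f - f‖ ^ 2 + J ((max 0 (1 - lam / lam')) • f)
        ≤ lam' / 2 * ‖u - f‖ ^ 2 + J u := by
  have hEig : HasSubgradientAt J (lam • f) f := hEig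
  refine HasSubgradientAt.isMinimizer_sq_norm_add hlam'.le ?_
  rcases le_or_gt lam lam' with hle | hlt
  · have hc : max 0 (1 - lam / lam') = 1 - lam / lam' :=
      max_eq_right (sub_nonneg.mpr ((div_le_one hlam').mpr hle))
    have hp : lam' • (f - (1 - lam / lam') • f) = lam • f := by
      rw [sub_smul, one_smul, sub_sub_cancel, smul_smul, mul_div_cancel₀ _ hlam'.ne']
    rw [hc, hp]
    exact hEig.smul_of_homogeneous hJhom (sub_nonneg.mpr ((div_le_one hlam').mpr hle))
  · have hc : max 0 (1 - lam / lam') = 0 :=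
      max_eq_left (sub_nonpos.mpr ((one_le_div hlam').mpr hlt.le))
    have hp : lam' • (f - (0 : ℝ) • f) = (lam' / lam) • (lam • f) := by
      rw [zero_smul, sub_zero, smul_smul, div_mul_cancel₀ _ hlam.ne']
    rw [hc, hp, zero_smul]
    exact hEig.smul_at_zero_of_homogeneous hJhom hJnonneg (div_nonneg hlam'.le hlam.le)
      ((div_le_one hlam).mpr hlt.le)

/-- loss of contrast for eigenfunctions of a one-homogeneous
regularizer: if `λ f ∈ ∂J(f)` for a convex, nonnegative, positively
one-homogeneous functional `J`, then `u = max(0, 1 - λ/λ') • f` minimizes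
`(λ'/2)‖u - f‖² + J(u)`. -/
theorem eigenfunction_loss_of_contrast {H : Type*} [NormedAddCommGroup H]
    [InnerProductSpace ℝ H]
    (J : H → ℝ) (hJconv : ConvexOn ℝ Set.univ J)
    (hJhom : ∀ (c : ℝ), 0 ≤ c → ∀ u : H, J (c • u) = c * J u)
    (hJnonneg : ∀ u : H, 0 ≤ J u)
    (f : H) (lam lam' : ℝ) (hlam : 0 < lam) (hlam' : 0 < lam')
    (hEig : ∀ w : H, J f + ⟪lam • f, w - f⟫ ≤ J w) :
    ∀ u : H,
      lam' / 2 * ‖(max 0 (1 - lam / lam')) • f - f‖ ^ 2 + J ((max 0 (1 - lam / lam')) • f)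
        ≤ lam' / 2 * ‖u - f‖ ^ 2 + J u :=
  eigenfunction_loss_of_contrast_general J hJhom hJnonneg f lam lam' hlam hlam' hEig
end

section
/- For the generalized SVF model with curl and divergence penalties, min_{u,w} (λ/2)‖u−f‖₂² + ‖∇u − w‖₁ + β‖∇×w‖₁ + γ‖∇·w‖₁: in the limit β, γ → ∞ (or for β, γ sufficiently large in the discrete setting), minimizers satisfy ∇×w = 0 and ∇·w = 0, hence (on a simply connected domain with suitable boundary conditions) w is constant, and the problem reduces to the ROF model min_u (λ/2)‖u−f‖₂² + ‖∇u − w₀‖₁ over constant fields w₀. -/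
/-!
A minimizer `(u, w)` can always be compared with `(u, w₀)`, where `w₀` is a curl- and
divergence-free field close to `w`: in finite dimensions the map `w ↦ (curl w, dvg w)` has a
bounded right inverse on its range, so some such `w₀` has `‖w - w₀‖ ≤ C ‖(curl w, dvg w)‖`.
Moving from `w` to `w₀` removes the penalty and raises the fidelity term `‖grad u - w‖` by at
most `C ‖(curl w, dvg w)‖`, so once `β, γ ≥ C + 1` minimality forces `curl w = 0` and `dvg w = 0`;
the penalized objective then agrees with the constrained one on all admissible competitors.
-/

namespace LinearMap

variable {𝕜 F V : Type*} [NontriviallyNormedField 𝕜] [CompleteSpace 𝕜]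
  [NormedAddCommGroup F] [NormedSpace 𝕜 F] [NormedAddCommGroup V] [NormedSpace 𝕜 V]
  [FiniteDimensional 𝕜 V]

theorem exists_preimage_norm_le_of_mem_range (T : F →ₗ[𝕜] V) :
    ∃ C, 0 ≤ C ∧ ∀ y ∈ range T, ∃ x, T x = y ∧ ‖x‖ ≤ C * ‖y‖ := by
  obtain ⟨S, hS⟩ := T.rangeRestrict.exists_rightInverse_of_surjective T.range_rangeRestrict
  let Sc : range T →L[𝕜] F := LinearMap.toContinuousLinearMap S
  refine ⟨‖Sc‖, norm_nonneg _, fun y hy => ⟨S ⟨y, hy⟩, ?_, Sc.le_opNorm ⟨y, hy⟩⟩⟩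
  exact congr_arg Subtype.val (LinearMap.congr_fun hS ⟨y, hy⟩)

theorem exists_norm_sub_le_of_mem_ker (T : F →ₗ[𝕜] V) :
    ∃ C, 0 ≤ C ∧ ∀ w, ∃ w₀, T w₀ = 0 ∧ ‖w - w₀‖ ≤ C * ‖T w‖ := by
  obtain ⟨C, hC, hpre⟩ := T.exists_preimage_norm_le_of_mem_range
  refine ⟨C, hC, fun w => ?_⟩
  obtain ⟨v, hv, hvle⟩ := hpre (T w) (mem_range_self T w)
  exact ⟨w - v, by rw [map_sub, hv, sub_self], by rwa [sub_sub_cancel]⟩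

end LinearMap

theorem map_eq_zero_of_forall_add_penalty_le {F V : Type*} [SeminormedAddGroup F]
    [NormedAddGroup V] (T : F → V) {C : ℝ} (hker : ∀ w, ∃ w₀, T w₀ = 0 ∧ ‖w - w₀‖ ≤ C * ‖T w‖)
    (φ : F → ℝ) (hφ : ∀ w w', φ w' ≤ φ w + ‖w - w'‖)
    (p : F → ℝ) (hp_ker : ∀ w, T w = 0 → p w = 0) (hp : ∀ w, (C + 1) * ‖T w‖ ≤ p w)
    (w : F) (hmin : ∀ w', φ w + p w ≤ φ w' + p w') : T w = 0 := by
  obtain ⟨w₀, hw₀, hdist⟩ := hker w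
  have : (C + 1) * ‖T w‖ ≤ C * ‖T w‖ :=
    calc (C + 1) * ‖T w‖ ≤ p w := hp w
      _ ≤ φ w₀ - φ w := by linarith [hmin w₀, hp_ker w₀ hw₀]
      _ ≤ ‖w - w₀‖ := by linarith [hφ w w₀]
      _ ≤ C * ‖T w‖ := hdist
  exact norm_le_zero_iff.mp (by linarith)

theorem exact_penalization_reduces_to_rof_general
    {E F G H' : Type*}
    [NormedAddCommGroup E] [InnerProductSpace ℝ E]
    [NormedAddCommGroup F] [NormedSpace ℝ F]
    [NormedAddCommGroup G] [NormedSpace ℝ G] [FiniteDimensional ℝ G]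
    [NormedAddCommGroup H'] [NormedSpace ℝ H'] [FiniteDimensional ℝ H']
    (grad : E →ₗ[ℝ] F) (curl : F →ₗ[ℝ] G) (dvg : F →ₗ[ℝ] H')
    (f : E) (lam : ℝ) :
    ∃ β₀ γ₀ : ℝ, ∀ β γ : ℝ, β₀ ≤ β → γ₀ ≤ γ →
      ∀ (u : E) (w : F),
        (∀ (u' : E) (w' : F),
          lam / 2 * ‖u - f‖ ^ 2 + ‖grad u - w‖ + β * ‖curl w‖ + γ * ‖dvg w‖
            ≤ lam / 2 * ‖u' - f‖ ^ 2 + ‖grad u' - w'‖ + β * ‖curl w'‖ + γ * ‖dvg w'‖) →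
        curl w = 0 ∧ dvg w = 0 ∧
          ∀ (u' : E) (w' : F), curl w' = 0 → dvg w' = 0 →
            lam / 2 * ‖u - f‖ ^ 2 + ‖grad u - w‖
              ≤ lam / 2 * ‖u' - f‖ ^ 2 + ‖grad u' - w'‖ := by
  obtain ⟨C, hC, hker⟩ := (curl.prod dvg).exists_norm_sub_le_of_mem_ker
  refine ⟨C + 1, C + 1, fun β γ hβ hγ u w hmin => ?_⟩
  have hpenalty : ∀ w', (C + 1) * ‖(curl w', dvg w')‖ ≤ β * ‖curl w'‖ + γ * ‖dvg w'‖ :=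
    fun w' => calc
      (C + 1) * ‖(curl w', dvg w')‖ ≤ (C + 1) * (‖curl w'‖ + ‖dvg w'‖) :=
        mul_le_mul_of_nonneg_left (max_le_add_of_nonneg (norm_nonneg _) (norm_nonneg _))
          (by linarith)
      _ ≤ β * ‖curl w'‖ + γ * ‖dvg w'‖ := by
        rw [mul_add]; gcongr
  have hfidelity : ∀ w w', ‖grad u - w'‖ ≤ ‖grad u - w‖ + ‖w - w'‖ :=
    norm_sub_le_norm_sub_add_norm_sub (grad u)
  have hfree : (curl w, dvg w) = 0 :=
    map_eq_zero_of_forall_add_penalty_le (curl.prod dvg) hker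
      (fun w' => lam / 2 * ‖u - f‖ ^ 2 + ‖grad u - w'‖) (fun w w' => by linarith [hfidelity w w'])
      (fun w' => β * ‖curl w'‖ + γ * ‖dvg w'‖)
      (fun w' h => by simp [(Prod.mk_eq_zero.mp h).1, (Prod.mk_eq_zero.mp h).2])
      hpenalty w (fun w' => by linarith [hmin u w'])
  obtain ⟨hcurl, hdvg⟩ := Prod.mk_eq_zero.mp hfree
  refine ⟨hcurl, hdvg, fun u' w' hcurl' hdvg' => ?_⟩
  simpa [hcurl, hdvg, hcurl', hdvg'] using hmin u' w'

/-- exact penalization for the generalized SVF model (discrete,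
finite-dimensional setting, with abstract gradient/curl/divergence operators
and L¹-type norms given by the norms of the target spaces): there are
thresholds `β₀, γ₀` such that for all `β ≥ β₀`, `γ ≥ γ₀`, every minimizer
`(u,w)` of `(λ/2)‖u-f‖² + ‖grad u - w‖ + β‖curl w‖ + γ‖div w‖` satisfies
`curl w = 0` and `div w = 0`, and `(u,w)` minimizes the reduced objective
`(λ/2)‖u-f‖² + ‖grad u - w'‖` over the curl- and divergence-free fields,
i.e. the problem reduces to the ROF-type constrained model. -/
theorem exact_penalization_reduces_to_rof
    {E F G H' : Type*}
    [NormedAddCommGroup E] [InnerProductSpace ℝ E] [FiniteDimensional ℝ E]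
    [NormedAddCommGroup F] [NormedSpace ℝ F] [FiniteDimensional ℝ F]
    [NormedAddCommGroup G] [NormedSpace ℝ G] [FiniteDimensional ℝ G]
    [NormedAddCommGroup H'] [NormedSpace ℝ H'] [FiniteDimensional ℝ H']
    (grad : E →ₗ[ℝ] F) (curl : F →ₗ[ℝ] G) (dvg : F →ₗ[ℝ] H')
    (f : E) (lam : ℝ) (hlam : 0 < lam) :
    ∃ β₀ γ₀ : ℝ, ∀ β γ : ℝ, β₀ ≤ β → γ₀ ≤ γ →
      ∀ (u : E) (w : F),
        (∀ (u' : E) (w' : F),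
          lam / 2 * ‖u - f‖ ^ 2 + ‖grad u - w‖ + β * ‖curl w‖ + γ * ‖dvg w‖
            ≤ lam / 2 * ‖u' - f‖ ^ 2 + ‖grad u' - w'‖ + β * ‖curl w'‖ + γ * ‖dvg w'‖) →
        curl w = 0 ∧ dvg w = 0 ∧
          ∀ (u' : E) (w' : F), curl w' = 0 → dvg w' = 0 →
            lam / 2 * ‖u - f‖ ^ 2 + ‖grad u - w‖
              ≤ lam / 2 * ‖u' - f‖ ^ 2 + ‖grad u' - w'‖ :=
  exact_penalization_reduces_to_rof_general grad curl dvg f lam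
end
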